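/- arXiv:1809.03867 — 7 statements merged into one kernel-verified Lean document; each statement's English description precedes it below -/
import Mathlib

section
/- For all natural numbers m, n, l with l ≤ m and l ≤ n, all λ : Fin l → ℝ, ξ : Fin m → ℝ, η : Fin n → ℝ, if 0 ≤ λ_k ≤ 1 for all k < l, ξ_k ≥ 0 for all k < m, and η_k ≥ 0 for all k < n, then F(m, n, l, λ, ξ, η) ≤ 1. (Upper-bound part of the paper's claim that its image similarity measurement takes values in [0,1]; it follows from the Cauchy–Schwarz inequality (∑_{k<l} λ_k ξ_k η_k)² ≤ (∑_{k<l} ξ_k η_k)(∑_{k<l} λ_k² ξ_k η_k) together with ∑_{k<l} ξ_k η_k ≤ (∑_{k<m} ξ_k)(∑_{k<n} η_k).) -/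
open Finset

/-- Extend a weight vector on `Fin m` to `ℕ`, zero outside. -/
noncomputable def extW {m : ℕ} (ξ : Fin m → ℝ) (k : ℕ) : ℝ :=
  if h : k < m then ξ ⟨k, h⟩ else 0

/-- The image similarity measurement of Zhang et al. (Eq. 2). -/
noncomputable def F (m n l : ℕ) (lam : Fin l → ℝ) (ξ : Fin m → ℝ) (η : Fin n → ℝ) : ℝ :=
  (∑ k : Fin l, lam k * extW ξ k * extW η k) /
    (Real.sqrt ((∑ k : Fin m, ξ k) * (∑ k : Fin n, η k)) *
      Real.sqrt ((∑ k : Fin l, (lam k) ^ 2 * extW ξ k * extW η k) +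
        (∑ k ∈ Finset.Ico l m, extW ξ k) * (∑ k ∈ Finset.Ico l n, extW η k)))

lemma extW_nonneg {m : ℕ} {ξ : Fin m → ℝ} (hξ : ∀ k, 0 ≤ ξ k) (k : ℕ) :
    0 ≤ extW ξ k := by
  unfold extW; split
  · exact hξ _
  · exact le_refl 0

lemma sum_extW {m : ℕ} (ξ : Fin m → ℝ) :
    ∑ k ∈ Finset.range m, extW ξ k = ∑ k : Fin m, ξ k := by
  rw [← Fin.sum_univ_eq_sum_range]
  refine Finset.sum_congr rfl fun k _ => ?_
  simp [extW, k.is_lt]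

theorem F_le_one (m n l : ℕ) (hlm : l ≤ m) (hln : l ≤ n)
    (lam : Fin l → ℝ) (ξ : Fin m → ℝ) (η : Fin n → ℝ)
    (hlam0 : ∀ k, 0 ≤ lam k) (hlam1 : ∀ k, lam k ≤ 1)
    (hξ : ∀ k, 0 ≤ ξ k) (hη : ∀ k, 0 ≤ η k) :
    F m n l lam ξ η ≤ 1 := by
  have hP := extW_nonneg hξ
  have hQ := extW_nonneg hη
  set N := ∑ k : Fin l, lam k * extW ξ k * extW η k with hNdef
  set A := (∑ k : Fin m, ξ k) * (∑ k : Fin n, η k) with hAdef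
  set S2 := ∑ k : Fin l, (lam k) ^ 2 * extW ξ k * extW η k with hS2def
  set T := (∑ k ∈ Finset.Ico l m, extW ξ k) * (∑ k ∈ Finset.Ico l n, extW η k) with hTdef
  set S1 := ∑ k : Fin l, extW ξ (k : ℕ) * extW η (k : ℕ) with hS1def
  have hN0 : 0 ≤ N :=
    Finset.sum_nonneg fun k _ => mul_nonneg (mul_nonneg (hlam0 k) (hP _)) (hQ _)
  have hS2nn : 0 ≤ S2 :=
    Finset.sum_nonneg fun k _ => mul_nonneg (mul_nonneg (sq_nonneg _) (hP _)) (hQ _)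
  have hηsum : (0:ℝ) ≤ ∑ k : Fin n, η k := Finset.sum_nonneg fun k _ => hη k
  have hA0 : 0 ≤ A := mul_nonneg (Finset.sum_nonneg fun k _ => hξ k) hηsum
  have hT0 : 0 ≤ T :=
    mul_nonneg (Finset.sum_nonneg fun k _ => hP k) (Finset.sum_nonneg fun k _ => hQ k)
  -- Cauchy–Schwarz
  have hCS : N ^ 2 ≤ S1 * S2 := by
    refine Finset.sum_sq_le_sum_mul_sum_of_sq_eq_mul Finset.univ
      (f := fun k : Fin l => extW ξ (k : ℕ) * extW η (k : ℕ))
      (g := fun k : Fin l => (lam k) ^ 2 * extW ξ (k : ℕ) * extW η (k : ℕ))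
      (r := fun k : Fin l => lam k * extW ξ (k : ℕ) * extW η (k : ℕ))
      (fun k _ => mul_nonneg (hP _) (hQ _))
      (fun k _ => mul_nonneg (mul_nonneg (sq_nonneg _) (hP _)) (hQ _))
      (fun k _ => by ring)
  -- S1 ≤ A
  have hS1A : S1 ≤ A := by
    have step1 : S1 ≤ ∑ k : Fin l, extW ξ (k : ℕ) * (∑ j : Fin n, η j) := by
      refine Finset.sum_le_sum fun k _ => mul_le_mul_of_nonneg_left ?_ (hP _)
      have hkn : (k : ℕ) < n := lt_of_lt_of_le k.is_lt hln
      have : extW η (k : ℕ) = η ⟨(k : ℕ), hkn⟩ := dif_pos hkn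
      rw [this]
      exact Finset.single_le_sum (fun i _ => hη i) (Finset.mem_univ _)
    have step2 : (∑ k : Fin l, extW ξ (k : ℕ)) ≤ ∑ k : Fin m, ξ k := by
      rw [Fin.sum_univ_eq_sum_range (fun k => extW ξ k) l, ← sum_extW ξ]
      exact Finset.sum_le_sum_of_subset_of_nonneg (Finset.range_subset_range.2 hlm)
        (fun k _ _ => hP k)
    calc S1 ≤ ∑ k : Fin l, extW ξ (k : ℕ) * (∑ j : Fin n, η j) := step1
      _ = (∑ k : Fin l, extW ξ (k : ℕ)) * (∑ j : Fin n, η j) :=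
        (Finset.sum_mul _ _ _).symm
      _ ≤ A := mul_le_mul_of_nonneg_right step2 hηsum
  have hN2 : N ^ 2 ≤ A * (S2 + T) := by
    calc N ^ 2 ≤ S1 * S2 := hCS
      _ ≤ A * (S2 + T) :=
        mul_le_mul hS1A (le_add_of_nonneg_right hT0) hS2nn hA0
  have hB0 : 0 ≤ S2 + T := add_nonneg hS2nn hT0
  have hND : N ≤ Real.sqrt A * Real.sqrt (S2 + T) := by
    rw [← Real.sqrt_mul hA0]
    calc N = Real.sqrt (N ^ 2) := (Real.sqrt_sq hN0).symm
      _ ≤ Real.sqrt (A * (S2 + T)) := Real.sqrt_le_sqrt hN2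
  unfold F
  rcases eq_or_lt_of_le (mul_nonneg (Real.sqrt_nonneg A) (Real.sqrt_nonneg (S2 + T))) with hD | hD
  · rw [← hNdef, ← hAdef, ← hS2def, ← hTdef, ← hD]
    simp
  · rw [← hNdef, ← hAdef, ← hS2def, ← hTdef]
    exact (div_le_one hD).2 hND
end

section
/- For all m ≥ 1, if l = m = n, λ_k = 1 for all k < m, η = ξ, and ξ_k > 0 for all k < m, then F(m, m, m, λ, ξ, ξ) = 1 if and only if m = 1. (In particular, the self-similarity equals 1 exactly when the image has a single visual word.) -/
open Finset

/-!
For an image compared with itself every word is matched with similarity 1, so the unmatched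
term vanishes and `F = √(∑ ξₖ²) / |∑ ξₖ|`. For positive weights `∑ ξₖ² < (∑ ξₖ)²` as soon as
there are two words, because the cross terms `ξᵢ ξⱼ` are positive; with one word the ratio is
`ξ₀ / ξ₀ = 1`, and with none it is `0 / 0 = 0`.
-/

namespace Finset

variable {ι R : Type*} [Semiring R] [PartialOrder R] [IsStrictOrderedRing R]
  {f : ι → R} {s : Finset ι}

lemma sum_sq_lt_sq_sum_of_pos (hf : ∀ i ∈ s, 0 < f i) (hs : 1 < #s) :
    ∑ i ∈ s, f i ^ 2 < (∑ i ∈ s, f i) ^ 2 := by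
  simp only [sq, sum_mul_sum]
  refine sum_lt_sum_of_nonempty (card_pos.mp (by omega)) fun i hi ↦ ?_
  obtain ⟨j, hj, hji⟩ := (one_lt_card_iff_nontrivial.mp hs).exists_ne i
  rw [← mul_sum]
  gcongr
  · exact hf i hi
  · exact single_lt_sum hji hi hj (hf j hj) fun k hk _ ↦ (hf k hk).le

end Finset

@[simp]
lemma extW_coe {m : ℕ} (ξ : Fin m → ℝ) (k : Fin m) : extW ξ k = ξ k := by
  simp [extW]

lemma F_self_eq_sqrt_sum_sq_div_abs_sum {m : ℕ} (ξ : Fin m → ℝ) :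
    F m m m (fun _ ↦ 1) ξ ξ = √(∑ k, ξ k ^ 2) / |∑ k, ξ k| := by
  simp only [F, extW_coe, one_mul, one_pow, Ico_self, sum_empty, mul_zero, add_zero,
    Real.sqrt_mul_self_eq_abs]
  simp only [← sq]
  rw [mul_comm, ← div_div, Real.div_sqrt]

theorem F_self_eq_one_iff_general (m : ℕ)
    (lam : Fin m → ℝ) (ξ : Fin m → ℝ)
    (hlam : ∀ k, lam k = 1) (hξ : ∀ k, 0 < ξ k) :
    F m m m lam ξ ξ = 1 ↔ m = 1 := by
  obtain rfl : lam = fun _ ↦ 1 := funext hlam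
  rw [F_self_eq_sqrt_sum_sq_div_abs_sum]
  rcases m with _ | _ | m
  · simp
  · simp [Real.sqrt_sq_eq_abs, (hξ 0).ne']
  · have hsum : 0 < ∑ k, ξ k := sum_pos (fun k _ ↦ hξ k) univ_nonempty
    have hlt : √(∑ k, ξ k ^ 2) < |∑ k, ξ k| := by
      rw [← Real.sqrt_sq_eq_abs]
      exact Real.sqrt_lt_sqrt (sum_nonneg fun k _ ↦ sq_nonneg _)
        (sum_sq_lt_sq_sum_of_pos (fun k _ ↦ hξ k) (by simp))
    simp only [Nat.add_eq_right, Nat.add_one_ne_zero, iff_false]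
    exact ((div_lt_one (abs_pos.mpr hsum.ne')).mpr hlt).ne

theorem F_self_eq_one_iff (m : ℕ) (hm : 1 ≤ m)
    (lam : Fin m → ℝ) (ξ : Fin m → ℝ)
    (hlam : ∀ k, lam k = 1) (hξ : ∀ k, 0 < ξ k) :
    F m m m lam ξ ξ = 1 ↔ m = 1 :=
  F_self_eq_one_iff_general m lam ξ hlam hξ
end

section
/- Strict decrease when an unmatched visual word is added (Theorem 1, fifth condition): let m, n, l satisfy 1 ≤ l ≤ m, l ≤ n, 1 ≤ n, let λ_k > 0 for all k < l, ξ_k > 0 for all k < m, η_k > 0 for all k < n, and let w > 0. Define ξ⁺ : Fin (m+1) → ℝ by ξ⁺_k = ξ_k for k < m and ξ⁺_m = w (a new visual word of the first image not belonging to any similar visual word pair). Then F(m+1, n, l, λ, ξ⁺, η) < F(m, n, l, λ, ξ, η). -/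
open Finset

theorem F_strict_decrease_add_unmatched (m n l : ℕ) (hl : 1 ≤ l) (hlm : l ≤ m) (hln : l ≤ n)
    (hn : 1 ≤ n)
    (lam : Fin l → ℝ) (ξ : Fin m → ℝ) (η : Fin n → ℝ)
    (hlam : ∀ k, 0 < lam k) (hξ : ∀ k, 0 < ξ k) (hη : ∀ k, 0 < η k)
    (w : ℝ) (hw : 0 < w)
    (ξp : Fin (m + 1) → ℝ)
    (hξp : ∀ k : Fin m, ξp k.castSucc = ξ k) (hξpw : ξp (Fin.last m) = w) :
    F (m + 1) n l lam ξp η < F m n l lam ξ η := by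
  have hext : ∀ k : ℕ, k < m → extW ξp k = extW ξ k := by
    intro k hk
    simp only [extW, dif_pos hk, dif_pos (Nat.lt_succ_of_lt hk)]
    exact hξp ⟨k, hk⟩
  have hextm : extW ξp m = w := by
    simp only [extW, dif_pos (Nat.lt_succ_self m)]
    exact hξpw
  -- extW values positive below bounds
  have hξpos : ∀ k : ℕ, k < m → 0 < extW ξ k := by
    intro k hk; simp only [extW, dif_pos hk]; exact hξ _
  have hηpos : ∀ k : ℕ, k < n → 0 < extW η k := by
    intro k hk; simp only [extW, dif_pos hk]; exact hη _
  -- numerator equality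
  have hnum : (∑ k : Fin l, lam k * extW ξp k * extW η k)
      = ∑ k : Fin l, lam k * extW ξ k * extW η k := by
    refine Finset.sum_congr rfl fun k _ => ?_
    rw [hext k (lt_of_lt_of_le k.2 hlm)]
  have hQ : (∑ k : Fin l, (lam k) ^ 2 * extW ξp k * extW η k)
      = ∑ k : Fin l, (lam k) ^ 2 * extW ξ k * extW η k := by
    refine Finset.sum_congr rfl fun k _ => ?_
    rw [hext k (lt_of_lt_of_le k.2 hlm)]
  have hS : (∑ k : Fin (m+1), ξp k) = (∑ k : Fin m, ξ k) + w := by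
    rw [Fin.sum_univ_castSucc]
    simp [hξp, hξpw]
  have hU : (∑ k ∈ Finset.Ico l (m+1), extW ξp k)
      = (∑ k ∈ Finset.Ico l m, extW ξ k) + w := by
    rw [Finset.sum_Ico_succ_top hlm, hextm]
    congr 1
    refine Finset.sum_congr rfl fun k hk => ?_
    exact hext k (Finset.mem_Ico.mp hk).2
  -- positivity facts
  have hml : 1 ≤ m := le_trans hl hlm
  have hSξ : 0 < ∑ k : Fin m, ξ k :=
    Finset.sum_pos (fun k _ => hξ k) (by simp [Finset.univ_nonempty_iff, Fin.pos_iff_nonempty.mp hml])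
  have hSη : 0 < ∑ k : Fin n, η k :=
    Finset.sum_pos (fun k _ => hη k) (by simp [Finset.univ_nonempty_iff, Fin.pos_iff_nonempty.mp hn])
  have hNpos : 0 < ∑ k : Fin l, lam k * extW ξ k * extW η k := by
    refine Finset.sum_pos (fun k _ => ?_) (by simp [Finset.univ_nonempty_iff, Fin.pos_iff_nonempty.mp hl])
    exact mul_pos (mul_pos (hlam k) (hξpos k (lt_of_lt_of_le k.2 hlm))) (hηpos k (lt_of_lt_of_le k.2 hln))
  have hQpos : 0 < ∑ k : Fin l, (lam k) ^ 2 * extW ξ k * extW η k := by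
    refine Finset.sum_pos (fun k _ => ?_) (by simp [Finset.univ_nonempty_iff, Fin.pos_iff_nonempty.mp hl])
    exact mul_pos (mul_pos (pow_pos (hlam k) 2) (hξpos k (lt_of_lt_of_le k.2 hlm))) (hηpos k (lt_of_lt_of_le k.2 hln))
  have hUξ : 0 ≤ ∑ k ∈ Finset.Ico l m, extW ξ k :=
    Finset.sum_nonneg fun k hk => le_of_lt (hξpos k (Finset.mem_Ico.mp hk).2)
  have hUη : 0 ≤ ∑ k ∈ Finset.Ico l n, extW η k :=
    Finset.sum_nonneg fun k hk => le_of_lt (hηpos k (Finset.mem_Ico.mp hk).2)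
  set Sξ := ∑ k : Fin m, ξ k
  set Sη := ∑ k : Fin n, η k
  set Q := ∑ k : Fin l, (lam k) ^ 2 * extW ξ k * extW η k
  set Uξ := ∑ k ∈ Finset.Ico l m, extW ξ k
  set Uη := ∑ k ∈ Finset.Ico l n, extW η k
  unfold F
  rw [hnum, hQ, hS, hU]
  have hD1 : 0 < Real.sqrt (Sξ * Sη) := Real.sqrt_pos.mpr (mul_pos hSξ hSη)
  have hD2 : 0 < Real.sqrt (Q + Uξ * Uη) :=
    Real.sqrt_pos.mpr (by positivity)
  have hD1' : Real.sqrt (Sξ * Sη) < Real.sqrt ((Sξ + w) * Sη) := by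
    apply Real.sqrt_lt_sqrt (le_of_lt (mul_pos hSξ hSη))
    nlinarith
  have hD2' : Real.sqrt (Q + Uξ * Uη) ≤ Real.sqrt (Q + (Uξ + w) * Uη) := by
    apply Real.sqrt_le_sqrt
    nlinarith
  have hDlt : Real.sqrt (Sξ * Sη) * Real.sqrt (Q + Uξ * Uη)
      < Real.sqrt ((Sξ + w) * Sη) * Real.sqrt (Q + (Uξ + w) * Uη) :=
    mul_lt_mul hD1' hD2' hD2 (le_of_lt (lt_of_lt_of_le (hD1.trans hD1') le_rfl))
  exact div_lt_div_of_pos_left hNpos (mul_pos hD1 hD2) hDlt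
end

section
/- Monotonicity under uniform scaling of the pair similarities (corrected form of Theorem 1, second condition): let m, n, l satisfy l ≤ m and l ≤ n, let λ_k ≥ 0 for all k < l, ξ_k ≥ 0 for all k < m, η_k ≥ 0 for all k < n, and let 0 ≤ t₁ ≤ t₂ be reals. Then F(m, n, l, t₁ • λ, ξ, η) ≤ F(m, n, l, t₂ • λ, ξ, η), where (t • λ)_k = t · λ_k. -/
open Finset

set_option maxHeartbeats 1000000 in
theorem F_mono_scaling_pair_similarities (m n l : ℕ) (hlm : l ≤ m) (hln : l ≤ n)
    (lam : Fin l → ℝ) (ξ : Fin m → ℝ) (η : Fin n → ℝ)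
    (hlam : ∀ k, 0 ≤ lam k) (hξ : ∀ k, 0 ≤ ξ k) (hη : ∀ k, 0 ≤ η k)
    (t₁ t₂ : ℝ) (ht₁ : 0 ≤ t₁) (ht : t₁ ≤ t₂) :
    F m n l (t₁ • lam) ξ η ≤ F m n l (t₂ • lam) ξ η := by
  have ht₂ : 0 ≤ t₂ := ht₁.trans ht
  have hextξ : ∀ k, 0 ≤ extW ξ k := by
    intro k; unfold extW; split <;> simp [hξ]
  have hextη : ∀ k, 0 ≤ extW η k := by
    intro k; unfold extW; split <;> simp [hη]
  set S : ℝ := ∑ k : Fin l, lam k * extW ξ k * extW η k with hSdef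
  set Q : ℝ := ∑ k : Fin l, (lam k) ^ 2 * extW ξ k * extW η k with hQdef
  set B : ℝ := (∑ k ∈ Finset.Ico l m, extW ξ k) * (∑ k ∈ Finset.Ico l n, extW η k) with hBdef
  set A : ℝ := Real.sqrt ((∑ k : Fin m, ξ k) * (∑ k : Fin n, η k)) with hAdef
  have hS : 0 ≤ S := Finset.sum_nonneg fun k _ =>
    mul_nonneg (mul_nonneg (hlam k) (hextξ _)) (hextη _)
  have hQ : 0 ≤ Q := Finset.sum_nonneg fun k _ =>
    mul_nonneg (mul_nonneg (sq_nonneg _) (hextξ _)) (hextη _)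
  have hB : 0 ≤ B := mul_nonneg (Finset.sum_nonneg fun k _ => hextξ _)
    (Finset.sum_nonneg fun k _ => hextη _)
  have hA : 0 ≤ A := Real.sqrt_nonneg _
  have hrw : ∀ t : ℝ, F m n l (t • lam) ξ η = (t * S) / (A * Real.sqrt (t ^ 2 * Q + B)) := by
    intro t
    unfold F
    simp only [Pi.smul_apply, smul_eq_mul, mul_pow]
    rw [hSdef, hQdef, hBdef, hAdef]
    congr 1
    · rw [Finset.mul_sum]
      refine Finset.sum_congr rfl fun k _ => ?_
      ring
    · congr 3
      rw [Finset.mul_sum]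
      refine Finset.sum_congr rfl fun k _ => ?_
      ring
  rw [hrw, hrw]
  -- key inequality
  have ht2sq : t₁ ^ 2 ≤ t₂ ^ 2 := by nlinarith
  have key : t₁ * Real.sqrt (t₂ ^ 2 * Q + B) ≤ t₂ * Real.sqrt (t₁ ^ 2 * Q + B) := by
    have h₁ : t₁ * Real.sqrt (t₂ ^ 2 * Q + B) = Real.sqrt (t₁ ^ 2 * (t₂ ^ 2 * Q + B)) := by
      rw [Real.sqrt_mul (sq_nonneg t₁), Real.sqrt_sq ht₁]
    have h₂ : t₂ * Real.sqrt (t₁ ^ 2 * Q + B) = Real.sqrt (t₂ ^ 2 * (t₁ ^ 2 * Q + B)) := by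
      rw [Real.sqrt_mul (sq_nonneg t₂), Real.sqrt_sq ht₂]
    rw [h₁, h₂]
    apply Real.sqrt_le_sqrt
    nlinarith [mul_le_mul_of_nonneg_right ht2sq hB]
  rcases eq_or_lt_of_le hA with hA0 | hA0
  · simp [← hA0]
  have h2 : 0 ≤ t₂ ^ 2 * Q + B := by positivity
  rcases eq_or_lt_of_le h2 with h20 | h20
  · have h1 : t₁ ^ 2 * Q + B = 0 := by nlinarith [mul_le_mul_of_nonneg_right ht2sq hQ, mul_nonneg (sq_nonneg t₁) hQ]
    rw [← h20, h1, Real.sqrt_zero, mul_zero, div_zero, div_zero]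
  have h1 : 0 ≤ t₁ ^ 2 * Q + B := by positivity
  rcases eq_or_lt_of_le h1 with h10 | h10
  · rw [← h10, Real.sqrt_zero, mul_zero, div_zero]
    have := Real.sqrt_pos.mpr h20
    positivity
  have ha : 0 < Real.sqrt (t₁ ^ 2 * Q + B) := Real.sqrt_pos.mpr h10
  have hb : 0 < Real.sqrt (t₂ ^ 2 * Q + B) := Real.sqrt_pos.mpr h20
  rw [div_le_div_iff₀ (by positivity) (by positivity)]
  nlinarith [mul_le_mul_of_nonneg_left key (mul_nonneg hS hA)]
end

section
/- Monotonicity in a minimal pair similarity (coordinate-wise corrected form of Theorem 1, second condition): let m, n, l satisfy 1 ≤ l ≤ m, l ≤ n, let ξ_k > 0 for all k < m and η_k > 0 for all k < n, let λ_k ≥ 0 for all k < l, fix j < l, and let λ' : Fin l → ℝ satisfy λ'_k = λ_k for all k ≠ j, λ_j ≤ λ'_j, and λ'_j ≤ λ_k for every k < l with k ≠ j. Then F(m, n, l, λ, ξ, η) ≤ F(m, n, l, λ', ξ, η): increasing the similarity of a similar visual word pair whose similarity remains minimal among all pairs does not decrease the image similarity. -/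
open Finset

lemma keyF (A B D a t t' : ℝ) (hA : 0 ≤ A) (hB : 0 ≤ B) (hD : 0 ≤ D)
    (ha : 0 ≤ a) (ht : 0 ≤ t) (htt : t ≤ t') (hBD : t' * B ≤ D) :
    (t * a + B) / (A * Real.sqrt (t ^ 2 * a + D)) ≤
      (t' * a + B) / (A * Real.sqrt (t' ^ 2 * a + D)) := by
  have ht' : 0 ≤ t' := ht.trans htt
  have h1 : t * B ≤ D := le_trans (by nlinarith) hBD
  have hQ : 0 ≤ t ^ 2 * a + D := by positivity
  have hQ' : 0 ≤ t' ^ 2 * a + D := by positivity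
  have hS : 0 ≤ t * a + B := by positivity
  have hS' : 0 ≤ t' * a + B := by positivity
  have hkey : (t * a + B) ^ 2 * (t' ^ 2 * a + D) ≤ (t' * a + B) ^ 2 * (t ^ 2 * a + D) := by
    have hfact : (t' * a + B) ^ 2 * (t ^ 2 * a + D) - (t * a + B) ^ 2 * (t' ^ 2 * a + D)
        = a * (t' - t) * (B * ((D - t * B) + (D - t' * B))
            + a * (t * (D - t' * B) + t' * (D - t * B))) := by ring
    nlinarith [mul_nonneg (mul_nonneg ha (sub_nonneg.2 htt))
      (add_nonneg (mul_nonneg hB (add_nonneg (sub_nonneg.2 h1) (sub_nonneg.2 hBD)))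
        (mul_nonneg ha (add_nonneg (mul_nonneg ht (sub_nonneg.2 hBD))
          (mul_nonneg ht' (sub_nonneg.2 h1)))))]
  rcases eq_or_lt_of_le hQ with hQ0 | hQpos
  · rw [← hQ0, Real.sqrt_zero, mul_zero, div_zero]
    exact div_nonneg hS' (by positivity)
  · have hQ'pos : 0 < t' ^ 2 * a + D :=
      lt_of_lt_of_le hQpos (by nlinarith [mul_le_mul_of_nonneg_right (pow_le_pow_left₀ ht htt 2) ha])
    rcases eq_or_lt_of_le hA with hA0 | hApos
    · rw [← hA0]; simp
    · rw [div_le_div_iff₀ (by positivity) (by positivity)]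
      have h2 : (t * a + B) * Real.sqrt (t' ^ 2 * a + D)
          ≤ (t' * a + B) * Real.sqrt (t ^ 2 * a + D) := by
        rw [← Real.sqrt_sq hS, ← Real.sqrt_sq hS', ← Real.sqrt_mul (sq_nonneg _),
          ← Real.sqrt_mul (sq_nonneg _)]
        exact Real.sqrt_le_sqrt hkey
      calc (t * a + B) * (A * Real.sqrt (t' ^ 2 * a + D))
          = A * ((t * a + B) * Real.sqrt (t' ^ 2 * a + D)) := by ring
        _ ≤ A * ((t' * a + B) * Real.sqrt (t ^ 2 * a + D)) :=
            mul_le_mul_of_nonneg_left h2 hA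
        _ = (t' * a + B) * (A * Real.sqrt (t ^ 2 * a + D)) := by ring

theorem F_mono_minimal_pair_similarity (m n l : ℕ) (hl : 1 ≤ l) (hlm : l ≤ m) (hln : l ≤ n)
    (lam lam' : Fin l → ℝ) (ξ : Fin m → ℝ) (η : Fin n → ℝ)
    (hξ : ∀ k, 0 < ξ k) (hη : ∀ k, 0 < η k) (hlam : ∀ k, 0 ≤ lam k)
    (j : Fin l)
    (hsame : ∀ k, k ≠ j → lam' k = lam k) (hjle : lam j ≤ lam' j)
    (hmin : ∀ k, k ≠ j → lam' j ≤ lam k) :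
    F m n l lam ξ η ≤ F m n l lam' ξ η := by
  classical
  have hexm : ∀ k : ℕ, 0 ≤ extW ξ k := by
    intro k; unfold extW; split
    · exact (hξ _).le
    · exact le_rfl
  have hexn : ∀ k : ℕ, 0 ≤ extW η k := by
    intro k; unfold extW; split
    · exact (hη _).le
    · exact le_rfl
  have decomp : ∀ μ : Fin l → ℝ, F m n l μ ξ η =
      (μ j * (extW ξ (j : ℕ) * extW η (j : ℕ)) +
        ∑ k ∈ Finset.univ.erase j, μ k * extW ξ (k : ℕ) * extW η (k : ℕ)) /
      (Real.sqrt ((∑ k : Fin m, ξ k) * (∑ k : Fin n, η k)) *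
        Real.sqrt ((μ j) ^ 2 * (extW ξ (j : ℕ) * extW η (j : ℕ)) +
          ((∑ k ∈ Finset.univ.erase j, (μ k) ^ 2 * extW ξ (k : ℕ) * extW η (k : ℕ)) +
            (∑ k ∈ Finset.Ico l m, extW ξ k) * (∑ k ∈ Finset.Ico l n, extW η k)))) := by
    intro μ
    unfold F
    rw [← Finset.add_sum_erase _ (fun k => μ k * extW ξ (k : ℕ) * extW η (k : ℕ))
        (Finset.mem_univ j),
      ← Finset.add_sum_erase _ (fun k => (μ k) ^ 2 * extW ξ (k : ℕ) * extW η (k : ℕ))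
        (Finset.mem_univ j), mul_assoc, mul_assoc (μ j ^ 2), add_assoc]
  have hBeq : ∑ k ∈ Finset.univ.erase j, lam' k * extW ξ (k : ℕ) * extW η (k : ℕ)
      = ∑ k ∈ Finset.univ.erase j, lam k * extW ξ (k : ℕ) * extW η (k : ℕ) :=
    Finset.sum_congr rfl fun k hk => by rw [hsame k (Finset.ne_of_mem_erase hk)]
  have hDeq : ∑ k ∈ Finset.univ.erase j, (lam' k) ^ 2 * extW ξ (k : ℕ) * extW η (k : ℕ)
      = ∑ k ∈ Finset.univ.erase j, (lam k) ^ 2 * extW ξ (k : ℕ) * extW η (k : ℕ) :=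
    Finset.sum_congr rfl fun k hk => by rw [hsame k (Finset.ne_of_mem_erase hk)]
  rw [decomp lam, decomp lam', hBeq, hDeq]
  have ht' : 0 ≤ lam' j := (hlam j).trans hjle
  apply keyF
  · exact Real.sqrt_nonneg _
  · exact Finset.sum_nonneg fun k _ =>
      mul_nonneg (mul_nonneg (hlam k) (hexm _)) (hexn _)
  · refine add_nonneg (Finset.sum_nonneg fun k _ =>
      mul_nonneg (mul_nonneg (sq_nonneg _) (hexm _)) (hexn _))
      (mul_nonneg (Finset.sum_nonneg fun k _ => hexm _) (Finset.sum_nonneg fun k _ => hexn _))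
  · exact mul_nonneg (hexm _) (hexn _)
  · exact hlam j
  · exact hjle
  · refine le_trans ?_ (le_add_of_nonneg_right
      (mul_nonneg (Finset.sum_nonneg fun k _ => hexm _) (Finset.sum_nonneg fun k _ => hexn _)))
    rw [Finset.mul_sum]
    refine Finset.sum_le_sum fun k hk => ?_
    have hk' := hmin k (Finset.ne_of_mem_erase hk)
    have := mul_nonneg (hexm (k : ℕ)) (hexn (k : ℕ))
    nlinarith [hlam k, mul_le_mul_of_nonneg_right
      (mul_le_mul_of_nonneg_right hk' (hlam k)) this]
end

section
/- Scale invariance of the similarity function: let m, n, l satisfy l ≤ m and l ≤ n, let λ_k ≥ 0 for all k < l, ξ_k ≥ 0 for all k < m, η_k ≥ 0 for all k < n, and let s > 0 and t > 0. Then F(m, n, l, λ, s • ξ, t • η) = F(m, n, l, λ, ξ, η), where (s • ξ)_k = s · ξ_k and (t • η)_k = t · η_k: rescaling all visual word weights of either image leaves the similarity unchanged. -/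
open Finset

theorem F_scale_invariant (m n l : ℕ) (hlm : l ≤ m) (hln : l ≤ n)
    (lam : Fin l → ℝ) (ξ : Fin m → ℝ) (η : Fin n → ℝ)
    (hlam : ∀ k, 0 ≤ lam k) (hξ : ∀ k, 0 ≤ ξ k) (hη : ∀ k, 0 ≤ η k)
    (s t : ℝ) (hs : 0 < s) (ht : 0 < t) :
    F m n l lam (s • ξ) (t • η) = F m n l lam ξ η := by
  have hst : (0:ℝ) < s * t := mul_pos hs ht
  have hes : ∀ k, extW (s • ξ) k = s * extW ξ k := by
    intro k; unfold extW; split <;> simp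
  have het : ∀ k, extW (t • η) k = t * extW η k := by
    intro k; unfold extW; split <;> simp
  unfold F
  have h1 : (∑ k : Fin l, lam k * extW (s • ξ) k * extW (t • η) k)
      = (s * t) * ∑ k : Fin l, lam k * extW ξ k * extW η k := by
    rw [Finset.mul_sum]; exact Finset.sum_congr rfl (fun k _ => by rw [hes, het]; ring)
  have h2 : (∑ k : Fin l, (lam k) ^ 2 * extW (s • ξ) k * extW (t • η) k)
      = (s * t) * ∑ k : Fin l, (lam k) ^ 2 * extW ξ k * extW η k := by
    rw [Finset.mul_sum]; exact Finset.sum_congr rfl (fun k _ => by rw [hes, het]; ring)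
  have h3 : (∑ k ∈ Finset.Ico l m, extW (s • ξ) k) = s * ∑ k ∈ Finset.Ico l m, extW ξ k := by
    rw [Finset.mul_sum]; exact Finset.sum_congr rfl (fun k _ => by rw [hes])
  have h4 : (∑ k ∈ Finset.Ico l n, extW (t • η) k) = t * ∑ k ∈ Finset.Ico l n, extW η k := by
    rw [Finset.mul_sum]; exact Finset.sum_congr rfl (fun k _ => by rw [het])
  have h5 : (∑ k : Fin m, (s • ξ) k) = s * ∑ k : Fin m, ξ k := by
    rw [Finset.mul_sum]; simp
  have h6 : (∑ k : Fin n, (t • η) k) = t * ∑ k : Fin n, η k := by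
    rw [Finset.mul_sum]; simp
  rw [h1, h2, h3, h4, h5, h6]
  have e1 : (s * ∑ k : Fin m, ξ k) * (t * ∑ k : Fin n, η k)
      = (s * t) * ((∑ k : Fin m, ξ k) * (∑ k : Fin n, η k)) := by ring
  have e2 : (s * t) * (∑ k : Fin l, (lam k) ^ 2 * extW ξ k * extW η k)
      + (s * ∑ k ∈ Finset.Ico l m, extW ξ k) * (t * ∑ k ∈ Finset.Ico l n, extW η k)
      = (s * t) * ((∑ k : Fin l, (lam k) ^ 2 * extW ξ k * extW η k)
        + (∑ k ∈ Finset.Ico l m, extW ξ k) * (∑ k ∈ Finset.Ico l n, extW η k)) := by ring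
  rw [e1, e2, Real.sqrt_mul hst.le, Real.sqrt_mul hst.le]
  rw [show Real.sqrt (s * t) * Real.sqrt ((∑ k : Fin m, ξ k) * (∑ k : Fin n, η k)) *
      (Real.sqrt (s * t) * Real.sqrt ((∑ k : Fin l, (lam k) ^ 2 * extW ξ k * extW η k)
        + (∑ k ∈ Finset.Ico l m, extW ξ k) * (∑ k ∈ Finset.Ico l n, extW η k)))
      = (Real.sqrt (s * t) * Real.sqrt (s * t)) *
        (Real.sqrt ((∑ k : Fin m, ξ k) * (∑ k : Fin n, η k)) *
          Real.sqrt ((∑ k : Fin l, (lam k) ^ 2 * extW ξ k * extW η k)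
        + (∑ k ∈ Finset.Ico l m, extW ξ k) * (∑ k ∈ Finset.Ico l n, extW η k))) from by ring,
    Real.mul_self_sqrt hst.le]
  exact mul_div_mul_left _ _ hst.ne'
end

section
/- Monotonicity in the matched weight when there is a single similar visual word pair (true instance of Theorem 1, first condition): let m, n satisfy 1 ≤ m, 1 ≤ n, take l = 1, let 0 < λ_0 ≤ 1, ξ_k > 0 for all k < m, η_k > 0 for all k < n, and let ξ' : Fin m → ℝ satisfy ξ'_k = ξ_k for all k ≠ 0 and ξ_0 ≤ ξ'_0. Then F(m, n, 1, λ, ξ, η) ≤ F(m, n, 1, λ, ξ', η): increasing the weight of the visual word belonging to the unique similar visual word pair does not decrease the similarity. -/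
open Finset

lemma extW_of_lt {m k : ℕ} (ξ : Fin m → ℝ) (hk : k < m) : extW ξ k = ξ ⟨k, hk⟩ :=
  dif_pos hk

lemma sum_eq_extW_zero_add_sum_Ico {m : ℕ} (hm : 1 ≤ m) (ξ : Fin m → ℝ) :
    ∑ k, ξ k = extW ξ 0 + ∑ k ∈ Ico 1 m, extW ξ k := by
  rw [← sum_eq_sum_Ico_succ_bot hm, ← range_eq_Ico, ← Fin.sum_univ_eq_sum_range]
  exact sum_congr rfl fun i _ => (extW_of_lt ξ i.isLt).symm

lemma F_one_eq {m n : ℕ} (hm : 1 ≤ m) (lam : Fin 1 → ℝ) (ξ : Fin m → ℝ) (η : Fin n → ℝ)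
    (hη : 0 ≤ ∑ k, η k) :
    F m n 1 lam ξ η = lam 0 * extW η 0 / √(∑ k, η k) *
      (extW ξ 0 / (√(extW ξ 0 + ∑ k ∈ Ico 1 m, extW ξ k) *
        √(lam 0 ^ 2 * extW η 0 * extW ξ 0 +
          (∑ k ∈ Ico 1 m, extW ξ k) * ∑ k ∈ Ico 1 n, extW η k))) := by
  unfold F
  rw [Fin.sum_univ_one, Fin.sum_univ_one, sum_eq_extW_zero_add_sum_Ico hm, Real.sqrt_mul' _ hη]
  simp only [Fin.val_zero]
  rw [mul_right_comm (lam 0 ^ 2) (extW ξ 0)]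
  ring

lemma div_sqrt_mul_sqrt_le_div_sqrt_mul_sqrt {S c d a b : ℝ} (hS : 0 ≤ S) (hc : 0 ≤ c)
    (hd : 0 ≤ d) (ha : 0 < a) (hab : a ≤ b) :
    a / (√(a + S) * √(c * a + d)) ≤ b / (√(b + S) * √(c * b + d)) := by
  obtain h | h := (by positivity : 0 ≤ c * a + d).eq_or_lt
  · rw [← h, Real.sqrt_zero, mul_zero, div_zero]
    have : 0 ≤ b := by linarith
    positivity
  have hb : 0 < b := ha.trans_le hab
  have hcb : 0 < c * b + d := by nlinarith
  rw [← pow_le_pow_iff_left₀ (by positivity) (by positivity) two_ne_zero, div_pow, div_pow,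
    mul_pow, mul_pow, Real.sq_sqrt (by positivity), Real.sq_sqrt h.le,
    Real.sq_sqrt (by positivity), Real.sq_sqrt hcb.le,
    div_le_div_iff₀ (by positivity) (by positivity)]
  have hba : 0 ≤ b - a := sub_nonneg.2 hab
  -- the difference of the two sides is `(b - a) (a b d + S c a b + S d (a + b))`
  nlinarith [mul_nonneg (mul_nonneg (mul_pos ha hb).le hd) hba,
    mul_nonneg (mul_nonneg (mul_nonneg hS hc) (mul_pos ha hb).le) hba,
    mul_nonneg (mul_nonneg (mul_nonneg hS hd) (add_pos ha hb).le) hba]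

theorem F_mono_matched_weight_single_pair_general (m n : ℕ) (hm : 1 ≤ m)
    (lam : Fin 1 → ℝ) (hlam0 : 0 < lam 0)
    (ξ ξ' : Fin m → ℝ) (η : Fin n → ℝ)
    (hξ : ∀ k, 0 < ξ k) (hη : ∀ k, 0 < η k)
    (hsame : ∀ k, k ≠ (⟨0, hm⟩ : Fin m) → ξ' k = ξ k)
    (h0le : ξ ⟨0, hm⟩ ≤ ξ' ⟨0, hm⟩) :
    F m n 1 lam ξ η ≤ F m n 1 lam ξ' η := by
  have hξ₀ : ∀ k, 0 ≤ ξ k := fun k => (hξ k).le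
  have hη₀ : ∀ k, 0 ≤ η k := fun k => (hη k).le
  have hS : 0 ≤ ∑ k ∈ Ico 1 m, extW ξ k := sum_nonneg fun k _ => extW_nonneg hξ₀ k
  have hU : 0 ≤ ∑ k ∈ Ico 1 n, extW η k := sum_nonneg fun k _ => extW_nonneg hη₀ k
  have hT : 0 ≤ ∑ k, η k := sum_nonneg fun k _ => hη₀ k
  have he : 0 ≤ extW η 0 := extW_nonneg hη₀ 0
  have ha : 0 < extW ξ 0 := by rw [extW_of_lt ξ hm]; exact hξ _
  have hmatched : extW ξ 0 ≤ extW ξ' 0 := by rwa [extW_of_lt ξ hm, extW_of_lt ξ' hm]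
  have hunmatched : ∑ k ∈ Ico 1 m, extW ξ' k = ∑ k ∈ Ico 1 m, extW ξ k := by
    refine sum_congr rfl fun k hk => ?_
    obtain ⟨hk1, hkm⟩ := mem_Ico.1 hk
    rw [extW_of_lt ξ' hkm, extW_of_lt ξ hkm, hsame _ (Fin.ne_of_val_ne (by omega : k ≠ 0))]
  rw [F_one_eq hm lam ξ η hT, F_one_eq hm lam ξ' η hT, hunmatched]
  exact mul_le_mul_of_nonneg_left
    (div_sqrt_mul_sqrt_le_div_sqrt_mul_sqrt hS (by positivity) (mul_nonneg hS hU) ha hmatched)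
    (by positivity)

theorem F_mono_matched_weight_single_pair (m n : ℕ) (hm : 1 ≤ m) (hn : 1 ≤ n)
    (lam : Fin 1 → ℝ) (hlam0 : 0 < lam 0) (hlam1 : lam 0 ≤ 1)
    (ξ ξ' : Fin m → ℝ) (η : Fin n → ℝ)
    (hξ : ∀ k, 0 < ξ k) (hη : ∀ k, 0 < η k)
    (hsame : ∀ k, k ≠ (⟨0, hm⟩ : Fin m) → ξ' k = ξ k)
    (h0le : ξ ⟨0, hm⟩ ≤ ξ' ⟨0, hm⟩) :
    F m n 1 lam ξ η ≤ F m n 1 lam ξ' η :=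
  F_mono_matched_weight_single_pair_general m n hm lam hlam0 ξ ξ' η hξ hη hsame h0le
end
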